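/- arXiv:1912.08125 — 5 statements merged into one kernel-verified Lean document; each statement's English description precedes it below -/
import Mathlib

section
/- For a ∉ {-1,0,1/2,1,2}, the cubic form F_3(a) = (a-1)x^3 + (2a^2+6a-1)x^2y - 3(a-1)x^2z + (a^2+4a+1)xy^2 + 2(a-1)xz^2 - 2a(a+4)xyz + (a+1)y^3 - 3(a+1)y^2z + 2(a+1)yz^2 vanishes at each of the twelve points P_0,…,P_11. -/
/-- The twelve points of the configuration, as homogeneous coordinate
vectors in `K^3`, depending on a parameter `a`. -/
def pts {K : Type*} [Field K] (a : K) : Fin 12 → Fin 3 → K :=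
  ![![0, 0, 1], ![1, 0, 1], ![2, 0, 1], ![0, 1, 1], ![0, 2, 1],
    ![1, 1, 3/2], ![1, 1, a/2 + 2], ![a + 1, 1, a + 2],
    ![a + 1, 1, 3*a/2 + 2], ![1, 1 - a, 2], ![1, 1 - a, 2 - a/2],
    ![a + 1, 1 - a, a/2 + 2]]

/-- The cubic form `F_3(a)`. -/
def F3 {K : Type*} [Field K] (a x y z : K) : K :=
  (a - 1)*x^3 + (2*a^2 + 6*a - 1)*x^2*y - 3*(a - 1)*x^2*z
    + (a^2 + 4*a + 1)*x*y^2 + 2*(a - 1)*x*z^2 - 2*a*(a + 4)*x*y*z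
    + (a + 1)*y^3 - 3*(a + 1)*y^2*z + 2*(a + 1)*y*z^2

theorem stmt3_general {K : Type*} [Field K] [CharZero K] (a : K) :
    ∀ i : Fin 12, F3 a (pts a i 0) (pts a i 1) (pts a i 2) = 0 := by
  intro i
  -- each case is a polynomial identity in `a` with halves, which `ring` clears since `2 ≠ 0` in `K`
  fin_cases i <;>
    simp only [pts, F3, Fin.reduceFinMk, Fin.zero_eta, Fin.mk_one, Fin.isValue, Matrix.cons_val,
      Matrix.cons_val_zero, Matrix.cons_val_one] <;>
    ring

/-- for `a ∉ {-1, 0, 1/2, 1, 2}`, the cubic form `F_3(a)`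
vanishes at each of the twelve points `P_0, …, P_11`. -/
theorem stmt3 {K : Type*} [Field K] [CharZero K] (a : K)
    (ha : a ≠ -1 ∧ a ≠ 0 ∧ a ≠ 1/2 ∧ a ≠ 1 ∧ a ≠ 2) :
    ∀ i : Fin 12, F3 a (pts a i 0) (pts a i 1) (pts a i 2) = 0 :=
  stmt3_general a
end

section
/- For a ∉ {-1,0,1/2,1,2}, the quartic form F_4(a) = y(3ax - 2az + x - y)(2ax + ay - 2az + 3x + y - 2z)(ax + 2x + 2y - 2z) vanishes at each of the twelve points P_0,…,P_11. -/
/-- The quartic form `F_4(a)`. -/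
def F4 {K : Type*} [Field K] (a x y z : K) : K :=
  y * (3*a*x - 2*a*z + x - y) * (2*a*x + a*y - 2*a*z + 3*x + y - 2*z)
    * (a*x + 2*x + 2*y - 2*z)

/-!
`F_4(a)` is the product of the four linear forms `y`, `ℓ₁ = (3a+1)x - y - 2az`,
`ℓ₂ = (2a+3)x + (a+1)y - 2(a+1)z` and `ℓ₃ = (a+2)x + 2y - 2z`, and the twelve points lie three on
each of these lines: `P₀, P₁, P₂` on `y = 0`, `P₅, P₈, P₉` on `ℓ₁ = 0`, `P₄, P₇, P₁₁` on `ℓ₂ = 0`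
and `P₃, P₆, P₁₀` on `ℓ₃ = 0`.
-/

theorem F4_eq_zero_iff {K : Type*} [Field K] {a x y z : K} :
    F4 a x y z = 0 ↔ y = 0 ∨ 3*a*x - 2*a*z + x - y = 0 ∨
      2*a*x + a*y - 2*a*z + 3*x + y - 2*z = 0 ∨ a*x + 2*x + 2*y - 2*z = 0 := by
  simp only [F4, mul_eq_zero, or_assoc]

theorem stmt4_general {K : Type*} [Field K] [CharZero K] (a : K) :
    ∀ i : Fin 12, F4 a (pts a i 0) (pts a i 1) (pts a i 2) = 0 := by
  intro i
  fin_cases i <;>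
    simp only [pts, Fin.reduceFinMk, Matrix.cons_val, Matrix.cons_val_zero, Matrix.cons_val_one] <;>
    rw [F4_eq_zero_iff]
  · exact .inl rfl
  · exact .inl rfl
  · exact .inl rfl
  · exact .inr <| .inr <| .inr <| by ring
  · exact .inr <| .inr <| .inl <| by ring
  · exact .inr <| .inl <| by ring
  · exact .inr <| .inr <| .inr <| by ring
  · exact .inr <| .inr <| .inl <| by ring
  · exact .inr <| .inl <| by ring
  · exact .inr <| .inl <| by ring
  · exact .inr <| .inr <| .inr <| by ring
  · exact .inr <| .inr <| .inl <| by ring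

/-- for `a ∉ {-1, 0, 1/2, 1, 2}`, the quartic form `F_4(a)`
vanishes at each of the twelve points `P_0, …, P_11`. -/
theorem stmt4 {K : Type*} [Field K] [CharZero K] (a : K)
    (ha : a ≠ -1 ∧ a ≠ 0 ∧ a ≠ 1/2 ∧ a ≠ 1 ∧ a ≠ 2) :
    ∀ i : Fin 12, F4 a (pts a i 0) (pts a i 1) (pts a i 2) = 0 :=
  stmt4_general a
end

section
/- Let E = (E_0,…,E_5) be a convergent sextuple in P^3_K. Define R_1 = (E_0+E_3) ∩ (E_1+E_2), R_2 = (E_0+E_5) ∩ (E_1+E_4), R_3 = (E_2+E_5) ∩ (E_3+E_4). Then the three lines R_1+E_4, R_2+E_2, R_3+E_0 meet in a common point. -/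
/-- Two homogeneous coordinate vectors define the same projective point
iff they are proportional. -/
def ProjPtEq {K : Type*} [Field K] {n : ℕ} (u v : Fin n → K) : Prop :=
  ∃ c : K, c ≠ 0 ∧ v = c • u

/-- A convergent sextuple: six points of `ℙ³_K` (given by nonzero coordinate
vectors), all distinct and different from the origin `O = (0,0,0,1)`, such
that the three lines `E₀+E₁`, `E₂+E₃`, `E₄+E₅` meet in a common point, there
are no other collinearities among the six points, and the six points are not
contained in a plane. -/
def IsConvergentSextuple {K : Type*} [Field K] (E : Fin 6 → Fin 4 → K) : Prop :=
  (∀ i, E i ≠ 0) ∧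
  (∀ i, ¬ ProjPtEq (![0, 0, 0, 1] : Fin 4 → K) (E i)) ∧
  (∀ i j : Fin 6, i ≠ j → ¬ ProjPtEq (E i) (E j)) ∧
  (∃ A : Fin 4 → K, A ≠ 0 ∧
    A ∈ Submodule.span K {E 0, E 1} ⊓ Submodule.span K {E 2, E 3} ⊓
      Submodule.span K {E 4, E 5}) ∧
  (∀ i j k : Fin 6, i ≠ j → i ≠ k → j ≠ k →
    LinearIndependent K ![E i, E j, E k]) ∧
  Submodule.span K (Set.range E) = ⊤

/-! Write the point of concurrency as `a₀E₀ + a₁E₁ = a₂E₂ + a₃E₃ = a₄E₄ + a₅E₅`. The two lines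
defining each `Rᵢ` span at least a 3-space, so they meet in a single projective point, and the two
decompositions exhibit it: `R₁ ∼ a₂E₂ - a₁E₁ = a₀E₀ - a₃E₃`, `R₂ ∼ a₄E₄ - a₁E₁ = a₀E₀ - a₅E₅`,
`R₃ ∼ a₄E₄ - a₃E₃ = a₂E₂ - a₅E₅`. Hence `a₂E₂ - a₁E₁ + a₄E₄` lies on `R₁+E₄`, `R₂+E₂` and `R₃+E₀`,
and it is nonzero because `a₀E₀ - a₃E₃ ≠ 0` and `E₀, E₃, E₄` are independent. -/

open Module Submodule

section

variable {K V : Type*} [Field K] [AddCommGroup V] [Module K V]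

theorem linearIndependent_triple_iff {x y z : V} :
    LinearIndependent K ![x, y, z] ↔ LinearIndependent K ![x, y] ∧ z ∉ span K {x, y} := by
  have hinit : Fin.init ![x, y, z] = ![x, y] := by ext i; fin_cases i <;> rfl
  rw [linearIndependent_finSucc', hinit, Matrix.range_cons_cons_empty]
  rfl

theorem finrank_span_pair_le_two (x y : V) : finrank K (span K {x, y}) ≤ 2 := by
  rw [← Matrix.range_cons_cons_empty x y ![]]
  exact finrank_range_le_card _

theorem finrank_inf_span_pair_le_one {x y z w : V} (h : LinearIndependent K ![x, y, z]) :
    finrank K ↥(span K {x, y} ⊓ span K {z, w}) ≤ 1 := by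
  have (a b : V) : FiniteDimensional K (span K {a, b}) :=
    FiniteDimensional.span_of_finite K (Set.toFinite _)
  have hsup : 3 ≤ finrank K ↥(span K {x, y} ⊔ span K {z, w}) := by
    calc 3 = finrank K (span K (Set.range ![x, y, z])) := by simp [finrank_span_eq_card h]
      _ ≤ _ := Submodule.finrank_mono <| span_le.2 <| by
          rintro _ ⟨i, rfl⟩
          fin_cases i
          · exact mem_sup_left (subset_span (by simp))
          · exact mem_sup_left (subset_span (by simp))
          · exact mem_sup_right (subset_span (by simp))
  have := finrank_sup_add_finrank_inf_eq (span K {x, y}) (span K {z, w})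
  have := finrank_span_pair_le_two (K := K) x y
  have := finrank_span_pair_le_two (K := K) z w
  omega

theorem mem_span_singleton_of_mem_inf_span_pair {x y z w u v : V}
    (h : LinearIndependent K ![x, y, z]) (hu : u ∈ span K {x, y} ⊓ span K {z, w}) (hu0 : u ≠ 0)
    (hv : v ∈ span K {x, y} ⊓ span K {z, w}) : v ∈ K ∙ u := by
  have : FiniteDimensional K (span K {x, y}) :=
    FiniteDimensional.span_of_finite K (Set.toFinite _)
  have hrank : finrank K ↥(span K {x, y} ⊓ span K {z, w}) = 1 :=
    le_antisymm (finrank_inf_span_pair_le_one h) <| by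
      rw [Nat.one_le_iff_ne_zero, Ne, Submodule.finrank_eq_zero]
      exact (Submodule.ne_bot_iff _).2 ⟨u, hu, hu0⟩
  rwa [← eq_span_singleton_of_mem_of_finrank_eq_one hrank hu hu0]

section TwoDecompositions

variable {x y z w : V} {a b c d : K} (h : a • x + b • y = c • z + d • w)
include h

theorem smul_sub_smul_mem_inf_span_pair : c • z - b • y ∈ span K {x, w} ⊓ span K {y, z} :=
  mem_inf.2 ⟨mem_span_pair.2 ⟨a, -d, by linear_combination (norm := module) h⟩,
    mem_span_pair.2 ⟨-b, c, by module⟩⟩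

theorem smul_sub_smul_ne_zero (h0 : a • x + b • y ≠ 0) (hyz : LinearIndependent K ![y, z])
    (hxw : LinearIndependent K ![x, w]) : c • z - b • y ≠ 0 := by
  intro hzy
  obtain ⟨rfl, rfl⟩ := hyz.eq_zero_of_pair' (sub_eq_zero.1 hzy).symm
  obtain ⟨rfl, rfl⟩ := hxw.eq_zero_of_pair' (by simpa using h)
  simp at h0

end TwoDecompositions

theorem add_smul_ne_zero_of_mem_span_pair {x y z v : V} (h : LinearIndependent K ![x, y, z])
    (hv : v ∈ span K {x, y}) (hv0 : v ≠ 0) (t : K) : v + t • z ≠ 0 := by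
  intro hsum
  have ht : t ≠ 0 := by rintro rfl; simp [hv0] at hsum
  refine (linearIndependent_triple_iff.1 h).2 ((smul_mem_iff _ ht).1 ?_)
  rw [eq_neg_of_add_eq_zero_right hsum]
  exact neg_mem hv

theorem add_smul_mem_span_pair {u v e : V} (hv : v ∈ K ∙ u) (t : K) : v + t • e ∈ span K {u, e} :=
  add_mem (span_mono (by simp) hv) (smul_mem _ _ (subset_span (by simp)))

end

theorem stmt11_general {K : Type*} [Field K]
    (E : Fin 6 → Fin 4 → K) (hE : IsConvergentSextuple E)
    (R1 R2 R3 : Fin 4 → K)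
    (hR1 : R1 ≠ 0 ∧ R1 ∈ Submodule.span K {E 0, E 3} ⊓
      Submodule.span K {E 1, E 2})
    (hR2 : R2 ≠ 0 ∧ R2 ∈ Submodule.span K {E 0, E 5} ⊓
      Submodule.span K {E 1, E 4})
    (hR3 : R3 ≠ 0 ∧ R3 ∈ Submodule.span K {E 2, E 5} ⊓
      Submodule.span K {E 3, E 4}) :
    ∃ A1 : Fin 4 → K, A1 ≠ 0 ∧
      A1 ∈ Submodule.span K {R1, E 4} ⊓ Submodule.span K {R2, E 2} ⊓
        Submodule.span K {R3, E 0} := by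
  obtain ⟨-, -, -, ⟨A, hA0, hA⟩, hind, -⟩ := hE
  simp only [mem_inf, mem_span_pair] at hA
  obtain ⟨⟨⟨a0, a1, h01⟩, ⟨a2, a3, h23⟩⟩, ⟨a4, a5, h45⟩⟩ := hA
  have h0123 : a0 • E 0 + a1 • E 1 = a2 • E 2 + a3 • E 3 := h01.trans h23.symm
  have h0145 : a0 • E 0 + a1 • E 1 = a4 • E 4 + a5 • E 5 := h01.trans h45.symm
  have h2345 : a2 • E 2 + a3 • E 3 = a4 • E 4 + a5 • E 5 := h23.trans h45.symm
  have h031 := hind 0 3 1 (by decide) (by decide) (by decide)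
  have h034 := hind 0 3 4 (by decide) (by decide) (by decide)
  have h051 := hind 0 5 1 (by decide) (by decide) (by decide)
  have h253 := hind 2 5 3 (by decide) (by decide) (by decide)
  have h120 := hind 1 2 0 (by decide) (by decide) (by decide)
  have hv1 := smul_sub_smul_mem_inf_span_pair h0123
  have hv1R := mem_span_singleton_of_mem_inf_span_pair h031 hR1.2 hR1.1 hv1
  have hv2R := mem_span_singleton_of_mem_inf_span_pair h051 hR2.2 hR2.1
    (smul_sub_smul_mem_inf_span_pair h0145)
  have hv3R := mem_span_singleton_of_mem_inf_span_pair h253 hR3.2 hR3.1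
    (smul_sub_smul_mem_inf_span_pair h2345)
  have hv1ne := smul_sub_smul_ne_zero h0123 (h01 ▸ hA0)
    (linearIndependent_triple_iff.1 h120).1 (linearIndependent_triple_iff.1 h031).1
  refine ⟨(a2 • E 2 - a1 • E 1) + a4 • E 4,
    add_smul_ne_zero_of_mem_span_pair h034 (mem_inf.1 hv1).1 hv1ne a4,
    mem_inf.2 ⟨mem_inf.2 ⟨add_smul_mem_span_pair hv1R a4, ?_⟩, ?_⟩⟩
  · convert add_smul_mem_span_pair (e := E 2) hv2R a2 using 1
    module
  · convert add_smul_mem_span_pair (e := E 0) hv3R a0 using 1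
    linear_combination (norm := module) -h0123

/-- for a convergent sextuple `E`, with
`R₁ = (E₀+E₃) ∩ (E₁+E₂)`, `R₂ = (E₀+E₅) ∩ (E₁+E₄)`,
`R₃ = (E₂+E₅) ∩ (E₃+E₄)`, the three lines `R₁+E₄`, `R₂+E₂`, `R₃+E₀` meet
in a common point. -/
theorem stmt11 {K : Type*} [Field K] [CharZero K]
    (E : Fin 6 → Fin 4 → K) (hE : IsConvergentSextuple E)
    (R1 R2 R3 : Fin 4 → K)
    (hR1 : R1 ≠ 0 ∧ R1 ∈ Submodule.span K {E 0, E 3} ⊓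
      Submodule.span K {E 1, E 2})
    (hR2 : R2 ≠ 0 ∧ R2 ∈ Submodule.span K {E 0, E 5} ⊓
      Submodule.span K {E 1, E 4})
    (hR3 : R3 ≠ 0 ∧ R3 ∈ Submodule.span K {E 2, E 5} ⊓
      Submodule.span K {E 3, E 4}) :
    ∃ A1 : Fin 4 → K, A1 ≠ 0 ∧
      A1 ∈ Submodule.span K {R1, E 4} ⊓ Submodule.span K {R2, E 2} ⊓
        Submodule.span K {R3, E 0} :=
  stmt11_general E hE R1 R2 R3 hR1 hR2 hR3
end

section
/- With notation as before, let A be the common point of the lines E_0+E_1, E_2+E_3, E_4+E_5, let A_1 be the common point of R_1+E_4, R_2+E_2, R_3+E_0, and let A_2 be the common point of R_1+E_5, R_2+E_3, R_3+E_1. Then A, A_1, A_2 are collinear. -/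
open Submodule

section LinearAlgebra

variable {R M : Type*} [Ring R] [AddCommGroup M] [Module R M]

theorem LinearIndependent.triple_iff {u v w : M} :
    LinearIndependent R ![u, v, w] ↔
      ∀ a b c : R, a • u + b • v + c • w = 0 → a = 0 ∧ b = 0 ∧ c = 0 := by
  simp [Fintype.linearIndependent_iff, Fin.sum_univ_three, Fin.forall_fin_succ,
    Fin.forall_fin_succ_pi, Fin.forall_fin_zero_pi, add_assoc]

theorem LinearIndependent.quadruple_iff {u v w x : M} :
    LinearIndependent R ![u, v, w, x] ↔
      ∀ a b c d : R, a • u + b • v + c • w + d • x = 0 → a = 0 ∧ b = 0 ∧ c = 0 ∧ d = 0 := by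
  simp [Fintype.linearIndependent_iff, Fin.sum_univ_four, Fin.forall_fin_succ,
    Fin.forall_fin_succ_pi, Fin.forall_fin_zero_pi, add_assoc]

end LinearAlgebra

section Lines

variable {K V : Type*} [Field K] [AddCommGroup V] [Module K V]

theorem mem_span_singleton_of_mem_inf_span_pair_s12 {u v w z X Y : V}
    (huvw : LinearIndependent K ![u, v, w])
    (hX : X ∈ span K {u, v} ⊓ span K {w, z}) (hY : Y ∈ span K {u, v} ⊓ span K {w, z})
    (hY0 : Y ≠ 0) : X ∈ K ∙ Y := by
  obtain ⟨a, b, hab⟩ := mem_span_pair.mp hX.1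
  obtain ⟨c, d, hcd⟩ := mem_span_pair.mp hX.2
  obtain ⟨a', b', hab'⟩ := mem_span_pair.mp hY.1
  obtain ⟨c', d', hcd'⟩ := mem_span_pair.mp hY.2
  by_cases hd' : d' = 0
  · subst hd'
    obtain ⟨ha', hb', -⟩ := LinearIndependent.triple_iff.mp huvw a' b' (-c') (by
      linear_combination (norm := module) hab' - hcd')
    exact absurd (by rw [← hab', ha', hb']; module) hY0
  -- eliminating `z` leaves a relation between `u`, `v`, `w` only
  obtain ⟨ha, hb, -⟩ := LinearIndependent.triple_iff.mp huvw (d' * a - d * a') (d' * b - d * b')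
    (d * c' - d' * c) (by linear_combination (norm := module) d' • (hab - hcd) - d • (hab' - hcd'))
  refine mem_span_singleton.mpr ⟨d / d', ?_⟩
  rw [← hab, ← hab', smul_add, smul_smul, smul_smul]
  congr 2
  · rw [div_mul_eq_mul_div, div_eq_iff hd']; linear_combination -ha
  · rw [div_mul_eq_mul_div, div_eq_iff hd']; linear_combination -hb

theorem span_pair_le_span_pair_of_mem_span_singleton {x x' y : V} (hx : x ∈ K ∙ x') :
    span K {x, y} ≤ span K {x', y} := by
  rw [span_insert, span_insert]
  exact sup_le_sup_right ((span_singleton_le_iff_mem _ _).mpr hx) _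

theorem not_linearIndependent_of_mem_span_singleton {x y A₁ A₂ : V} (h₁ : A₁ ∈ K ∙ y)
    (h₂ : A₂ ∈ K ∙ (x + y)) : ¬ LinearIndependent K ![x, A₁, A₂] := by
  intro hli
  obtain ⟨c, rfl⟩ := mem_span_singleton.mp h₁
  obtain ⟨d, rfl⟩ := mem_span_singleton.mp h₂
  obtain ⟨-, rfl, -⟩ := LinearIndependent.triple_iff.mp hli (d * c) d (-c) (by module)
  exact hli.ne_zero 2 (by simp)

end Lines

namespace NormalizedSextuple

variable {K V : Type*} [Field K] [AddCommGroup V] [Module K V] {e₀ e₁ e₂ e₃ e₄ e₅ : V}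

theorem R₁_mem {R₁ : V} (he : LinearIndependent K ![e₀, e₁, e₂, e₄]) (h₃ : e₂ + e₃ = e₀ + e₁)
    (hR₁ : R₁ ∈ span K {e₀, e₃} ⊓ span K {e₁, e₂}) : R₁ ∈ K ∙ (e₁ - e₂) := by
  have hli : LinearIndependent K ![e₁, e₂, e₀] := by
    refine LinearIndependent.triple_iff.mpr fun a b c h ↦ ?_
    obtain ⟨h₀, h₁, h₂, -⟩ := LinearIndependent.quadruple_iff.mp he c a b 0 (by
      linear_combination (norm := module) h)
    exact ⟨h₁, h₂, h₀⟩
  refine mem_span_singleton_of_mem_inf_span_pair_s12 hli ⟨hR₁.2, hR₁.1⟩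
    ⟨mem_span_pair.mpr ⟨1, -1, by module⟩,
      mem_span_pair.mpr ⟨-1, 1, by linear_combination (norm := module) h₃⟩⟩
    (sub_ne_zero.mpr (hli.injective.ne (by decide : (0 : Fin 3) ≠ 1)))

theorem R₃_mem {R₃ : V} (he : LinearIndependent K ![e₀, e₁, e₂, e₄]) (h₃ : e₂ + e₃ = e₀ + e₁)
    (h₅ : e₄ + e₅ = e₀ + e₁) (hR₃ : R₃ ∈ span K {e₂, e₅} ⊓ span K {e₃, e₄}) :
    R₃ ∈ K ∙ (e₃ - e₄) := by
  have hli : LinearIndependent K ![e₃, e₄, e₂] := by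
    refine LinearIndependent.triple_iff.mpr fun a b c h ↦ ?_
    obtain ⟨h₀, -, h₂, h₄⟩ := LinearIndependent.quadruple_iff.mp he a a (c - a) b (by
      linear_combination (norm := module) h - a • h₃)
    exact ⟨h₀, h₄, by linear_combination h₂ + h₀⟩
  refine mem_span_singleton_of_mem_inf_span_pair_s12 hli ⟨hR₃.2, hR₃.1⟩
    ⟨mem_span_pair.mpr ⟨1, -1, by module⟩,
      mem_span_pair.mpr ⟨-1, 1, by linear_combination (norm := module) h₅ - h₃⟩⟩
    (sub_ne_zero.mpr (hli.injective.ne (by decide : (0 : Fin 3) ≠ 1)))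

theorem A₁_mem {R₁ R₃ A₁ : V} (he : LinearIndependent K ![e₀, e₁, e₂, e₄])
    (h₃ : e₂ + e₃ = e₀ + e₁) (hR₁ : R₁ ∈ K ∙ (e₁ - e₂)) (hR₃ : R₃ ∈ K ∙ (e₃ - e₄))
    (hA₁ : A₁ ∈ span K {R₁, e₄} ⊓ span K {R₃, e₀}) : A₁ ∈ K ∙ (e₁ - e₂ - e₄) := by
  have hli : LinearIndependent K ![e₁ - e₂, e₄, e₃ - e₄] := by
    refine LinearIndependent.triple_iff.mpr fun a b c h ↦ ?_
    obtain ⟨h₀, h₁, -, h₄⟩ := LinearIndependent.quadruple_iff.mp he c (a + c) (-(a + c)) (b - c)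
      (by linear_combination (norm := module) h - c • h₃)
    exact ⟨by linear_combination h₁ - h₀, by linear_combination h₄ + h₀, h₀⟩
  refine mem_span_singleton_of_mem_inf_span_pair_s12 hli
    (inf_le_inf (span_pair_le_span_pair_of_mem_span_singleton hR₁)
      (span_pair_le_span_pair_of_mem_span_singleton hR₃) hA₁)
    ⟨mem_span_pair.mpr ⟨1, -1, by module⟩,
      mem_span_pair.mpr ⟨1, -1, by linear_combination (norm := module) h₃⟩⟩
    (sub_ne_zero.mpr (hli.injective.ne (by decide : (0 : Fin 3) ≠ 1)))

theorem A₂_mem {R₁ R₃ A₂ : V} (he : LinearIndependent K ![e₀, e₁, e₂, e₄])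
    (h₃ : e₂ + e₃ = e₀ + e₁) (h₅ : e₄ + e₅ = e₀ + e₁) (hR₁ : R₁ ∈ K ∙ (e₁ - e₂))
    (hR₃ : R₃ ∈ K ∙ (e₃ - e₄)) (hA₂ : A₂ ∈ span K {R₁, e₅} ⊓ span K {R₃, e₁}) :
    A₂ ∈ K ∙ (e₁ - e₂ + e₅) := by
  have hli : LinearIndependent K ![e₁ - e₂, e₅, e₃ - e₄] := by
    refine LinearIndependent.triple_iff.mpr fun a b c h ↦ ?_
    obtain ⟨h₀, h₁, h₂, -⟩ := LinearIndependent.quadruple_iff.mp he (b + c) (a + b + c) (-(a + c))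
      (-(b + c)) (by linear_combination (norm := module) h - c • h₃ - b • h₅)
    exact ⟨by linear_combination h₁ - h₀, by linear_combination h₁ + h₂, by
      linear_combination -h₂ - h₁ + h₀⟩
  refine mem_span_singleton_of_mem_inf_span_pair_s12 hli
    (inf_le_inf (span_pair_le_span_pair_of_mem_span_singleton hR₁)
      (span_pair_le_span_pair_of_mem_span_singleton hR₃) hA₂)
    ⟨mem_span_pair.mpr ⟨1, 1, by module⟩,
      mem_span_pair.mpr ⟨1, 1, by linear_combination (norm := module) h₃ - h₅⟩⟩
    fun h ↦ one_ne_zero (LinearIndependent.triple_iff.mp hli 1 1 0 (by rw [← h]; module)).1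

theorem not_linearIndependent {R₁ R₃ A₁ A₂ : V} (he : LinearIndependent K ![e₀, e₁, e₂, e₄])
    (h₃ : e₂ + e₃ = e₀ + e₁) (h₅ : e₄ + e₅ = e₀ + e₁)
    (hR₁ : R₁ ∈ span K {e₀, e₃} ⊓ span K {e₁, e₂}) (hR₃ : R₃ ∈ span K {e₂, e₅} ⊓ span K {e₃, e₄})
    (hA₁ : A₁ ∈ span K {R₁, e₄} ⊓ span K {R₃, e₀})
    (hA₂ : A₂ ∈ span K {R₁, e₅} ⊓ span K {R₃, e₁}) :
    ¬ LinearIndependent K ![e₀ + e₁, A₁, A₂] := by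
  have hR₁' := R₁_mem he h₃ hR₁
  have hR₃' := R₃_mem he h₃ h₅ hR₃
  refine not_linearIndependent_of_mem_span_singleton (A₁_mem he h₃ hR₁' hR₃' hA₁) ?_
  rw [show e₀ + e₁ + (e₁ - e₂ - e₄) = e₁ - e₂ + e₅ by linear_combination (norm := module) -h₅]
  exact A₂_mem he h₃ h₅ hR₁' hR₃' hA₂

end NormalizedSextuple

section Sextuple

variable {K : Type*} [Field K]

theorem coeff_ne_zero_of_mem_span_pair {V : Type*} [AddCommGroup V] [Module K V]
    {w x y z A : V} {a b : K} (hxyz : LinearIndependent K ![x, y, z]) (hA : A ≠ 0)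
    (hAyz : A ∈ span K {y, z}) (h : a • w + b • x = A) : a ≠ 0 := by
  rintro rfl
  obtain ⟨c, d, hcd⟩ := mem_span_pair.mp hAyz
  obtain ⟨hb, -, -⟩ := LinearIndependent.triple_iff.mp hxyz b (-c) (-d) (by
    linear_combination (norm := module) h - hcd)
  exact hA (by rw [← h, hb]; module)

theorem IsConvergentSextuple.exists_smul_add_smul_eq {E : Fin 6 → Fin 4 → K}
    (hE : IsConvergentSextuple E) {A : Fin 4 → K} (hA0 : A ≠ 0)
    (hA : A ∈ span K {E 0, E 1} ⊓ span K {E 2, E 3} ⊓ span K {E 4, E 5}) :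
    ∃ a : Fin 6 → K, (∀ i, a i ≠ 0) ∧ a 0 • E 0 + a 1 • E 1 = A ∧
      a 2 • E 2 + a 3 • E 3 = A ∧ a 4 • E 4 + a 5 • E 5 = A := by
  have hT := hE.2.2.2.2.1
  obtain ⟨⟨hA01, hA23⟩, hA45⟩ := hA
  obtain ⟨a₀, a₁, h₀₁⟩ := mem_span_pair.mp hA01
  obtain ⟨a₂, a₃, h₂₃⟩ := mem_span_pair.mp hA23
  obtain ⟨a₄, a₅, h₄₅⟩ := mem_span_pair.mp hA45
  refine ⟨![a₀, a₁, a₂, a₃, a₄, a₅], fun i ↦ ?_, h₀₁, h₂₃, h₄₅⟩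
  fin_cases i
  · exact coeff_ne_zero_of_mem_span_pair (hT 1 2 3 (by decide) (by decide) (by decide)) hA0 hA23
      h₀₁
  · exact coeff_ne_zero_of_mem_span_pair (hT 0 2 3 (by decide) (by decide) (by decide)) hA0 hA23
      ((add_comm _ _).trans h₀₁)
  · exact coeff_ne_zero_of_mem_span_pair (hT 3 0 1 (by decide) (by decide) (by decide)) hA0 hA01
      h₂₃
  · exact coeff_ne_zero_of_mem_span_pair (hT 2 0 1 (by decide) (by decide) (by decide)) hA0 hA01
      ((add_comm _ _).trans h₂₃)
  · exact coeff_ne_zero_of_mem_span_pair (hT 5 0 1 (by decide) (by decide) (by decide)) hA0 hA01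
      h₄₅
  · exact coeff_ne_zero_of_mem_span_pair (hT 4 0 1 (by decide) (by decide) (by decide)) hA0 hA01
      ((add_comm _ _).trans h₄₅)

theorem IsConvergentSextuple.linearIndependent_smul {E : Fin 6 → Fin 4 → K}
    (hE : IsConvergentSextuple E) {a : Fin 6 → K} (ha : ∀ i, a i ≠ 0)
    (h₃ : a 2 • E 2 + a 3 • E 3 = a 0 • E 0 + a 1 • E 1)
    (h₅ : a 4 • E 4 + a 5 • E 5 = a 0 • E 0 + a 1 • E 1) :
    LinearIndependent K ![a 0 • E 0, a 1 • E 1, a 2 • E 2, a 4 • E 4] := by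
  refine linearIndependent_of_top_le_span_of_card_eq_finrank ?_ (by simp)
  set S := span K (Set.range ![a 0 • E 0, a 1 • E 1, a 2 • E 2, a 4 • E 4])
  have hS : ∀ j, ![a 0 • E 0, a 1 • E 1, a 2 • E 2, a 4 • E 4] j ∈ S :=
    fun j ↦ subset_span ⟨j, rfl⟩
  have hmem : ∀ i, a i • E i ∈ S := by
    intro i
    fin_cases i <;> dsimp only
    · exact hS 0
    · exact hS 1
    · exact hS 2
    · show a 3 • E 3 ∈ S
      rw [eq_sub_of_add_eq' h₃]
      exact S.sub_mem (S.add_mem (hS 0) (hS 1)) (hS 2)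
    · exact hS 3
    · show a 5 • E 5 ∈ S
      rw [eq_sub_of_add_eq' h₅]
      exact S.sub_mem (S.add_mem (hS 0) (hS 1)) (hS 3)
  rw [← hE.2.2.2.2.2, span_le]
  rintro _ ⟨i, rfl⟩
  simpa [ha i] using S.smul_mem (a i)⁻¹ (hmem i)

end Sextuple

theorem stmt12_general {K : Type*} [Field K]
    (E : Fin 6 → Fin 4 → K) (hE : IsConvergentSextuple E)
    (R1 R2 R3 A A1 A2 : Fin 4 → K)
    (hR1 : R1 ≠ 0 ∧ R1 ∈ Submodule.span K {E 0, E 3} ⊓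
      Submodule.span K {E 1, E 2})
    (hR3 : R3 ≠ 0 ∧ R3 ∈ Submodule.span K {E 2, E 5} ⊓
      Submodule.span K {E 3, E 4})
    (hA : A ≠ 0 ∧ A ∈ Submodule.span K {E 0, E 1} ⊓
      Submodule.span K {E 2, E 3} ⊓ Submodule.span K {E 4, E 5})
    (hA1 : A1 ≠ 0 ∧ A1 ∈ Submodule.span K {R1, E 4} ⊓
      Submodule.span K {R2, E 2} ⊓ Submodule.span K {R3, E 0})
    (hA2 : A2 ≠ 0 ∧ A2 ∈ Submodule.span K {R1, E 5} ⊓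
      Submodule.span K {R2, E 3} ⊓ Submodule.span K {R3, E 1}) :
    ¬ LinearIndependent K ![A, A1, A2] := by
  obtain ⟨a, ha, h₀₁, h₂₃, h₄₅⟩ := hE.exists_smul_add_smul_eq hA.1 hA.2
  have h₃ := h₂₃.trans h₀₁.symm
  have h₅ := h₄₅.trans h₀₁.symm
  have hs : ∀ i, K ∙ (a i • E i) = K ∙ E i := fun i ↦ span_singleton_smul_eq (ha i).isUnit _
  rw [← h₀₁]
  refine NormalizedSextuple.not_linearIndependent (R₁ := R1) (R₃ := R3)
    (hE.linearIndependent_smul ha h₃ h₅) h₃ h₅ ?_ ?_ ?_ ?_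
  · simpa only [span_insert, hs] using hR1.2
  · simpa only [span_insert, hs] using hR3.2
  · simpa only [span_insert, hs] using mem_inf.mpr ⟨hA1.2.1.1, hA1.2.2⟩
  · simpa only [span_insert, hs] using mem_inf.mpr ⟨hA2.2.1.1, hA2.2.2⟩

/-- with `A` the common point of the lines `E₀+E₁`, `E₂+E₃`,
`E₄+E₅`, `A₁` the common point of `R₁+E₄`, `R₂+E₂`, `R₃+E₀`, and `A₂` the
common point of `R₁+E₅`, `R₂+E₃`, `R₃+E₁`, the points `A`, `A₁`, `A₂` are
collinear. -/
theorem stmt12 {K : Type*} [Field K] [CharZero K]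
    (E : Fin 6 → Fin 4 → K) (hE : IsConvergentSextuple E)
    (R1 R2 R3 A A1 A2 : Fin 4 → K)
    (hR1 : R1 ≠ 0 ∧ R1 ∈ Submodule.span K {E 0, E 3} ⊓
      Submodule.span K {E 1, E 2})
    (hR2 : R2 ≠ 0 ∧ R2 ∈ Submodule.span K {E 0, E 5} ⊓
      Submodule.span K {E 1, E 4})
    (hR3 : R3 ≠ 0 ∧ R3 ∈ Submodule.span K {E 2, E 5} ⊓
      Submodule.span K {E 3, E 4})
    (hA : A ≠ 0 ∧ A ∈ Submodule.span K {E 0, E 1} ⊓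
      Submodule.span K {E 2, E 3} ⊓ Submodule.span K {E 4, E 5})
    (hA1 : A1 ≠ 0 ∧ A1 ∈ Submodule.span K {R1, E 4} ⊓
      Submodule.span K {R2, E 2} ⊓ Submodule.span K {R3, E 0})
    (hA2 : A2 ≠ 0 ∧ A2 ∈ Submodule.span K {R1, E 5} ⊓
      Submodule.span K {R2, E 3} ⊓ Submodule.span K {R3, E 1}) :
    ¬ LinearIndependent K ![A, A1, A2] :=
  stmt12_general E hE R1 R2 R3 A A1 A2 hR1 hR3 hA hA1 hA2
end

section
/- The group generated in PGL(4,K) by M_2 = [[2,2,2,0],[0,-2,0,0],[0,0,-2,0],[0,-2,-3,2]] and N = [[0, 2ε-2, 2ε-4, 0],[0, -4ε+2, 0, 0],[2ε-4, 2ε-2, 0, 0],[-3, -3ε, -3ε, 4ε-2]], where ε^2 - ε + 1 = 0, has order 18 and is isomorphic to S_3 × C_3. -/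
/-!
Let `ω = -ε`, a primitive cube root of unity. The group `S₃ × C₃` acts linearly on `K³ ⊕ K`: `S₃`
by permutation matrices on `K³ = triv ⊕ std` and by the sign on `K`, the generator `ζ` of `C₃` by
`ω` on `std` and trivially on `triv ⊕ sign`. In a suitable basis of `K⁴` the elements
`((1 2), 1)` and `((0 1), ζ)`, which generate `S₃ × C₃`, act by `M₂ / 2` and `N / (4ε - 2)`, so `G`
is the image of `S₃ × C₃` in `PGL(4, K)`. This projective representation is faithful: for every
`g ≠ 1`, either `g²` or some commutator `⁅g, h⁆` is of the form `(σ, 1)` with `σ 0 ≠ 0` (a zero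
diagonal entry, against the sign entry `±1`) or `(1, ζᵏ)` with `ζᵏ ≠ 1` (an off-diagonal entry
`(1 - ωᵏ) / 3 ≠ 0`), and such an element does not act by a scalar.
-/

open Equiv Matrix
open scoped commutatorElement

/-- The projective general linear group `PGL(4, K)`:
invertible `4 × 4` matrices modulo scalars. -/
abbrev PGL4 (K : Type*) [Field K] :=
  GL (Fin 4) K ⧸ Subgroup.center (GL (Fin 4) K)

namespace Matrix

section SumZeroScalar

variable {ι K : Type*} [Fintype ι] [DecidableEq ι] [Field K]

/-- Acts as `x` on the vectors with coordinate sum zero and as the identity on constant vectors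
(when `Fintype.card ι` is invertible in `K`). -/
def sumZeroScalar (x : K) : Matrix ι ι K :=
  x • 1 + ((1 - x) / Fintype.card ι) • of fun _ _ => 1

omit [DecidableEq ι] in
lemma allOnes_mul_allOnes :
    (of fun _ _ => 1 : Matrix ι ι K) * of (fun _ _ => 1) =
      (Fintype.card ι : K) • of fun _ _ => 1 := by
  ext i j
  simp [mul_apply]

lemma permMatrix_mul_allOnes (σ : Perm ι) :
    σ.permMatrix K * of (fun _ _ => 1) = of fun _ _ => 1 := by
  ext i j
  simp [mul_apply, PEquiv.toMatrix_apply]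

lemma allOnes_mul_permMatrix (σ : Perm ι) :
    (of fun _ _ => 1 : Matrix ι ι K) * σ.permMatrix K = of fun _ _ => 1 := by
  ext i j
  simp [mul_apply, PEquiv.toMatrix_apply, ← Equiv.eq_symm_apply]

lemma commute_permMatrix_sumZeroScalar (σ : Perm ι) (x : K) :
    Commute (σ.permMatrix K) (sumZeroScalar x) := by
  simp only [Commute, SemiconjBy, sumZeroScalar, Matrix.mul_add, Matrix.add_mul, Matrix.mul_smul,
    Matrix.smul_mul, permMatrix_mul_allOnes, allOnes_mul_permMatrix, Matrix.mul_one, Matrix.one_mul]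

lemma sumZeroScalar_one : (sumZeroScalar 1 : Matrix ι ι K) = 1 := by
  simp [sumZeroScalar]

lemma sumZeroScalar_mul (h : (Fintype.card ι : K) ≠ 0) (x y : K) :
    (sumZeroScalar x : Matrix ι ι K) * sumZeroScalar y = sumZeroScalar (x * y) := by
  simp only [sumZeroScalar, Matrix.mul_add, Matrix.add_mul, Matrix.mul_smul, Matrix.smul_mul,
    Matrix.mul_one, Matrix.one_mul, allOnes_mul_allOnes]
  match_scalars
  · field_simp
  · field_simp
    ring

lemma sumZeroScalar_apply_of_ne (x : K) {i j : ι} (hij : i ≠ j) :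
    (sumZeroScalar x : Matrix ι ι K) i j = (1 - x) / Fintype.card ι := by
  simp [sumZeroScalar, one_apply_ne hij]

end SumZeroScalar

section ConjHom

variable {m n R : Type*} [Fintype m] [Fintype n] [DecidableEq m] [DecidableEq n] [CommSemiring R]

def conjHom (X : Matrix m n R) (Y : Matrix n m R) (hYX : Y * X = 1) (hXY : X * Y = 1) :
    Matrix n n R →* Matrix m m R where
  toFun A := X * A * Y
  map_one' := by rw [Matrix.mul_one, hXY]
  map_mul' A B := by
    simp only [Matrix.mul_assoc]
    rw [← Matrix.mul_assoc Y X, hYX, Matrix.one_mul]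

variable {X : Matrix m n R} {Y : Matrix n m R} {hYX : Y * X = 1} {hXY : X * Y = 1}

lemma eq_scalar_of_conjHom_eq_scalar {A : Matrix n n R} {c : R}
    (h : conjHom X Y hYX hXY A = scalar m c) : A = scalar n c := by
  have : Y * (X * A * Y) * X = A := by
    simp only [← Matrix.mul_assoc, hYX, Matrix.one_mul]
    rw [Matrix.mul_assoc, hYX, Matrix.mul_one]
  rw [← this, show X * A * Y = scalar m c from h, scalar_apply, ← smul_one_eq_diagonal,
    Matrix.mul_smul, Matrix.mul_one, Matrix.smul_mul, hYX, smul_one_eq_diagonal, scalar_apply]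

lemma eq_smul_conjHom_of_mul_eq {M : Matrix m m R} {A : Matrix n n R} {c : R}
    (h : M * X = c • (X * A)) : M = c • conjHom X Y hYX hXY A := by
  calc M = M * X * Y := by rw [Matrix.mul_assoc, hXY, Matrix.mul_one]
    _ = c • conjHom X Y hYX hXY A := by rw [h, Matrix.smul_mul]; rfl

end ConjHom

end Matrix

lemma Matrix.GeneralLinearGroup.mk_eq_mk_of_val_eq_smul {n K : Type*} [Fintype n] [DecidableEq n]
    [Field K] {u v : GL n K} (c : K) (h : (v : Matrix n n K) = c • (u : Matrix n n K)) :
    (u : GL n K ⧸ Subgroup.center (GL n K)) = v := by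
  rw [QuotientGroup.eq, mem_center_iff_val_mem_range_scalar]
  refine ⟨c, ?_⟩
  rw [Units.val_mul, h, Matrix.mul_smul, ← Units.val_mul, inv_mul_cancel, Units.val_one,
    scalar_apply, smul_one_eq_diagonal]

lemma MonoidHom.injective_of_sq_or_commutator_mem {G H : Type*} [Group G] [Group H] (f : G →* H)
    (S : Set G) (hS : ∀ x ∈ S, f x ≠ 1) (hG : ∀ g : G, g ≠ 1 → g ^ 2 ∈ S ∨ ∃ h, ⁅g, h⁆ ∈ S) :
    Function.Injective f := by
  rw [injective_iff_map_eq_one]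
  intro g hg
  by_contra hne
  rcases hG g hne with hsq | ⟨h, hcomm⟩
  · exact hS _ hsq (by rw [map_pow, hg, one_pow])
  · exact hS _ hcomm (by rw [map_commutatorElement, hg, commutatorElement_one_left])

def zmodPowHom {K : Type*} [Monoid K] {n : ℕ} [NeZero n] (ω : K) (hω : ω ^ n = 1) :
    Multiplicative (ZMod n) →* K where
  toFun k := ω ^ (Multiplicative.toAdd k).val
  map_one' := by simp
  map_mul' a b := by
    rw [toAdd_mul, ZMod.val_add, ← pow_eq_pow_mod _ hω, pow_add]

lemma zmodPowHom_eq_one_iff {K : Type*} [CommMonoid K] {n : ℕ} [NeZero n] {ω : K}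
    (hω : IsPrimitiveRoot ω n) (k : Multiplicative (ZMod n)) :
    zmodPowHom ω hω.pow_eq_one k = 1 ↔ k = 1 := by
  rw [zmodPowHom, MonoidHom.coe_mk, OneHom.coe_mk, hω.pow_eq_one_iff_dvd,
    Nat.dvd_iff_mod_eq_zero, Nat.mod_eq_of_lt (ZMod.val_lt _), ZMod.val_eq_zero, toAdd_eq_zero]

abbrev S3C3 := Perm (Fin 3) × Multiplicative (ZMod 3)

namespace S3C3

lemma closure_eq_top :
    Subgroup.closure {((swap 1 2 : Perm (Fin 3)), (1 : Multiplicative (ZMod 3))),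
      (swap 0 1, .ofAdd 1)} = (⊤ : Subgroup S3C3) := by
  set a : S3C3 := (swap 1 2, 1)
  set b : S3C3 := (swap 0 1, .ofAdd 1)
  have hwords : ∀ g : S3C3, ∃ i : Fin 2, ∃ j : Fin 6, ∃ k : Fin 2,
      g = a ^ (i : ℕ) * b ^ (j : ℕ) * a ^ (k : ℕ) := by
    decide
  have ha : a ∈ Subgroup.closure {a, b} := Subgroup.subset_closure (by simp)
  have hb : b ∈ Subgroup.closure {a, b} := Subgroup.subset_closure (by simp)
  rw [Subgroup.eq_top_iff']
  intro g
  obtain ⟨i, j, k, rfl⟩ := hwords g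
  exact mul_mem (mul_mem (pow_mem ha _) (pow_mem hb _)) (pow_mem ha _)

def detectingSet : Set S3C3 := {x | (x.2 = 1 ∧ x.1 0 ≠ 0) ∨ (x.1 = 1 ∧ x.2 ≠ 1)}

lemma sq_or_commutator_mem_detectingSet :
    ∀ g : S3C3, g ≠ 1 → g ^ 2 ∈ detectingSet ∨ ∃ h, ⁅g, h⁆ ∈ detectingSet := by
  simp only [detectingSet, commutatorElement_def]
  decide

variable {K : Type*} [Field K]

lemma permMatrix_swap_one_two :
    (swap (1 : Fin 3) 2).permMatrix K = !![1, 0, 0; 0, 0, 1; 0, 1, 0] := by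
  ext i j
  fin_cases i <;> fin_cases j <;> simp [PEquiv.toMatrix_apply, swap_apply_def]

lemma permMatrix_swap_zero_one :
    (swap (0 : Fin 3) 1).permMatrix K = !![0, 1, 0; 1, 0, 0; 0, 0, 1] := by
  ext i j
  fin_cases i <;> fin_cases j <;> simp [PEquiv.toMatrix_apply, swap_apply_def]

def rep (ω : K) (hω : IsPrimitiveRoot ω 3) :
    S3C3 →* Matrix (Fin 3 ⊕ Fin 1) (Fin 3 ⊕ Fin 1) K where
  toFun g :=
    fromBlocks (permMatrixHom g.1 * sumZeroScalar (zmodPowHom ω hω.pow_eq_one g.2)) 0 0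
      (scalar (Fin 1) ((Perm.sign g.1 : ℤ) : K))
  map_one' := by simp [sumZeroScalar_one]
  map_mul' g h := by
    have h3 : (Fintype.card (Fin 3) : K) ≠ 0 := by
      simpa using hω.neZero'.out
    simp only [Prod.fst_mul, Prod.snd_mul, map_mul, fromBlocks_multiply, Matrix.mul_zero,
      Matrix.zero_mul, add_zero, zero_add, Units.val_mul, Int.cast_mul]
    rw [← sumZeroScalar_mul h3]
    simp only [mul_assoc]
    congr 2
    rw [← mul_assoc, ← mul_assoc, permMatrixHom_apply,
      (commute_permMatrix_sumZeroScalar h.1⁻¹ _).eq]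

lemma rep_ne_scalar (ω : K) (hω : IsPrimitiveRoot ω 3) {x : S3C3} (hx : x ∈ detectingSet)
    (c : K) : rep ω hω x ≠ scalar _ c := by
  intro h
  rcases hx with ⟨h2, h0⟩ | ⟨h1, h2⟩
  · have hσ : x.1.symm 0 ≠ 0 := fun h' => h0 (by simpa [h'] using x.1.apply_symm_apply 0)
    have e₁ := congr_fun₂ h (.inl 0) (.inl 0)
    have e₂ := congr_fun₂ h (.inr 0) (.inr 0)
    simp only [rep, MonoidHom.coe_mk, OneHom.coe_mk, fromBlocks_apply₁₁, fromBlocks_apply₂₂,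
      scalar_apply, diagonal_apply_eq] at e₁ e₂
    simp [h2, sumZeroScalar_one, PEquiv.toMatrix_apply, hσ] at e₁
    exact ((Perm.sign x.1).isUnit.map (Int.castRingHom K)).ne_zero (e₂.trans e₁.symm)
  · have e := congr_fun₂ h (.inl 0) (.inl 1)
    simp [rep, h1, sumZeroScalar_apply_of_ne, sub_eq_zero, eq_comm (a := (1 : K)),
      zmodPowHom_eq_one_iff hω] at e
    exact h2 (e.resolve_right (by simpa using hω.neZero'.out))

lemma rep_swap_one_two (ω : K) (hω : IsPrimitiveRoot ω 3) :
    rep ω hω (swap 1 2, 1) = fromBlocks !![1, 0, 0; 0, 0, 1; 0, 1, 0] 0 0 (-1) := by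
  simp [rep, permMatrix_swap_one_two, sumZeroScalar_one]

lemma rep_swap_zero_one_ofAdd_one (ω : K) (hω : IsPrimitiveRoot ω 3) :
    rep ω hω (swap 0 1, .ofAdd 1) =
      fromBlocks !![(1 - ω) / 3, ω + (1 - ω) / 3, (1 - ω) / 3;
        ω + (1 - ω) / 3, (1 - ω) / 3, (1 - ω) / 3;
        (1 - ω) / 3, (1 - ω) / 3, ω + (1 - ω) / 3] 0 0 (-1) := by
  simp only [rep, MonoidHom.coe_mk, OneHom.coe_mk, permMatrixHom_apply, swap_inv,
    permMatrix_swap_zero_one, zmodPowHom, toAdd_ofAdd, ZMod.val_one_eq_one_mod, Perm.sign_swap']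
  congr 1
  · ext i j
    fin_cases i <;> fin_cases j <;>
      simp [sumZeroScalar, mul_apply, Fin.sum_univ_succ, one_apply]
  · ext i j
    fin_cases i
    fin_cases j
    simp

end S3C3

section Generators

variable {K : Type*} [Field K]

variable (K) in
/-- A solution of the intertwining relations `matM₂_mul_basisChange` and `matN_mul_basisChange`;
it happens not to depend on `ε`. -/
def basisChange : Matrix (Fin 4) (Fin 3 ⊕ Fin 1) K :=
  fromCols !![-2, 0, 2; 0, 0, 0; 0, 2, -2; 0, 3, 0] !![-4; 12; -4; 3]

variable (K) in
def basisChangeInv : Matrix (Fin 3 ⊕ Fin 1) (Fin 4) K :=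
  fromRows !![-1/2, -5/12, -1/2, 1/3; 0, -1/12, 0, 1/3; 0, -1/4, -1/2, 1/3] !![0, 1/12, 0, 0]

variable (K) in
def matM₂ : Matrix (Fin 4) (Fin 4) K :=
  !![2, 2, 2, 0; 0, -2, 0, 0; 0, 0, -2, 0; 0, -2, -3, 2]

def matN (ε : K) : Matrix (Fin 4) (Fin 4) K :=
  !![0, 2*ε - 2, 2*ε - 4, 0; 0, -4*ε + 2, 0, 0;
    2*ε - 4, 2*ε - 2, 0, 0; -3, -3*ε, -3*ε, 4*ε - 2]

lemma matM₂_mul_basisChange (ω : K) (hω : IsPrimitiveRoot ω 3) :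
    matM₂ K * basisChange K = (2 : K) • (basisChange K * S3C3.rep ω hω (swap 1 2, 1)) := by
  rw [S3C3.rep_swap_one_two, basisChange, fromCols_mul_fromBlocks]
  ext i (j | j) <;> fin_cases i <;> fin_cases j <;>
    norm_num [mul_apply, Fin.sum_univ_succ, matM₂]

variable [CharZero K]

lemma isPrimitiveRoot_neg_of_sq_sub_add_one (ε : K) (hε : ε^2 - ε + 1 = 0) :
    IsPrimitiveRoot (-ε) 3 := by
  refine IsPrimitiveRoot.mk_of_lt _ (by norm_num) (by linear_combination (-ε - 1) * hε) ?_
  intro l hl0 hl3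
  interval_cases l
  · intro h
    have : (3 : K) = 0 := by linear_combination hε + (ε - 2) * h
    norm_num at this
  · intro h
    have : (3 : K) = 0 := by linear_combination (ε + 2) * hε - (ε + 1) * h
    norm_num at this

lemma basisChangeInv_mul_basisChange : basisChangeInv K * basisChange K = 1 := by
  rw [basisChange, basisChangeInv, fromRows_mul_fromCols, ← fromBlocks_one]
  congr 1 <;> ext i j <;> fin_cases i <;> fin_cases j <;>
    norm_num [mul_apply, Fin.sum_univ_succ]

lemma basisChange_mul_basisChangeInv : basisChange K * basisChangeInv K = 1 := by
  rw [basisChange, basisChangeInv, fromCols_mul_fromRows]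
  ext i j
  fin_cases i <;> fin_cases j <;> norm_num [mul_apply, Fin.sum_univ_succ]

lemma matN_mul_basisChange (ε : K) (hε : ε^2 - ε + 1 = 0) :
    matN ε * basisChange K = (4 * ε - 2) • (basisChange K *
      S3C3.rep (-ε) (isPrimitiveRoot_neg_of_sq_sub_add_one ε hε) (swap 0 1, .ofAdd 1)) := by
  rw [S3C3.rep_swap_zero_one_ofAdd_one, basisChange, fromCols_mul_fromBlocks]
  ext i (j | j) <;> fin_cases i <;> fin_cases j <;>
    simp [mul_apply, Fin.sum_univ_succ, matN] <;> grind

def projRep (ε : K) (hε : ε^2 - ε + 1 = 0) : S3C3 →* PGL4 K :=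
  (QuotientGroup.mk' _).comp
    ((conjHom (basisChange K) (basisChangeInv K) basisChangeInv_mul_basisChange
      basisChange_mul_basisChangeInv).comp
      (S3C3.rep (-ε) (isPrimitiveRoot_neg_of_sq_sub_add_one ε hε))).toHomUnits

lemma projRep_injective (ε : K) (hε : ε^2 - ε + 1 = 0) : Function.Injective (projRep ε hε) := by
  refine (projRep ε hε).injective_of_sq_or_commutator_mem S3C3.detectingSet
    (fun x hx h1 => ?_) S3C3.sq_or_commutator_mem_detectingSet
  rw [projRep, MonoidHom.comp_apply, QuotientGroup.mk'_apply, QuotientGroup.eq_one_iff,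
    GeneralLinearGroup.mem_center_iff_val_mem_range_scalar] at h1
  obtain ⟨c, hc⟩ := h1
  exact S3C3.rep_ne_scalar _ _ hx c (eq_scalar_of_conjHom_eq_scalar
    (hYX := basisChangeInv_mul_basisChange) (hXY := basisChange_mul_basisChangeInv) hc.symm)

lemma projRep_swap_one_two (ε : K) (hε : ε^2 - ε + 1 = 0) (u : GL (Fin 4) K)
    (hu : (u : Matrix (Fin 4) (Fin 4) K) = matM₂ K) :
    projRep ε hε (swap 1 2, 1) = u :=
  GeneralLinearGroup.mk_eq_mk_of_val_eq_smul 2 (hu.trans (eq_smul_conjHom_of_mul_eq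
    (hYX := basisChangeInv_mul_basisChange) (hXY := basisChange_mul_basisChangeInv)
    (matM₂_mul_basisChange _ _)))

lemma projRep_swap_zero_one_ofAdd_one (ε : K) (hε : ε^2 - ε + 1 = 0) (u : GL (Fin 4) K)
    (hu : (u : Matrix (Fin 4) (Fin 4) K) = matN ε) :
    projRep ε hε (swap 0 1, .ofAdd 1) = u :=
  GeneralLinearGroup.mk_eq_mk_of_val_eq_smul _ (hu.trans (eq_smul_conjHom_of_mul_eq
    (hYX := basisChangeInv_mul_basisChange) (hXY := basisChange_mul_basisChangeInv)
    (matN_mul_basisChange ε hε)))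

end Generators

/-- for `ε` a root of `x² - x + 1`, the subgroup of
`PGL(4, K)` generated by the matrices `M₂` and `N` has order 18 and is
isomorphic to `S₃ × C₃`. -/
theorem stmt18 (K : Type*) [Field K] [CharZero K] (ε : K)
    (hε : ε^2 - ε + 1 = 0) :
    let G : Subgroup (PGL4 K) :=
      Subgroup.closure
        {QuotientGroup.mk (Matrix.GeneralLinearGroup.mkOfDetNeZero
            (!![2, 2, 2, 0; 0, -2, 0, 0; 0, 0, -2, 0; 0, -2, -3, 2] :
              Matrix (Fin 4) (Fin 4) K)
            (by
              rw [Matrix.det_succ_row_zero]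
              simp [Fin.sum_univ_four, Matrix.det_fin_three, Matrix.submatrix])),
          QuotientGroup.mk (Matrix.GeneralLinearGroup.mkOfDetNeZero
            (!![0, 2*ε - 2, 2*ε - 4, 0; 0, -4*ε + 2, 0, 0;
                2*ε - 4, 2*ε - 2, 0, 0; -3, -3*ε, -3*ε, 4*ε - 2] :
              Matrix (Fin 4) (Fin 4) K)
            (by
              rw [Matrix.det_succ_row_zero]
              simp [Fin.sum_univ_four, Matrix.det_fin_three, Matrix.submatrix]
              simp (config := {decide := true}) [Fin.succAbove]
              refine ⟨fun h => ?_, ⟨fun h => ?_, fun h => ?_⟩, fun h => ?_⟩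
              · have h3 : (3:K) = 0 := by
                  linear_combination hε - (ε/2 + 1/2) * h
                norm_num at h3
              · have h3 : (3:K)/4 = 0 := by
                  linear_combination hε - (-ε/4 + 1/8) * h
                norm_num at h3
              · have h3 : (3:K) = 0 := by
                  linear_combination hε - (ε/2 + 1/2) * h
                norm_num at h3
              · have h3 : (3:K)/4 = 0 := by
                  linear_combination hε - (ε/4 - 1/8) * h
                norm_num at h3))}
    Nat.card G = 18 ∧
      Nonempty (G ≃* Equiv.Perm (Fin 3) × Multiplicative (ZMod 3)) := by
  intro G
  have hG : (projRep ε hε).range = G := by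
    rw [MonoidHom.range_eq_map, ← S3C3.closure_eq_top, MonoidHom.map_closure, Set.image_pair]
    exact congrArg₂ (fun x y => Subgroup.closure {x, y})
      (projRep_swap_one_two ε hε _ (by rfl)) (projRep_swap_zero_one_ofAdd_one ε hε _ (by rfl))
  let e : S3C3 ≃* G :=
    (MonoidHom.ofInjective (projRep_injective ε hε)).trans (MulEquiv.subgroupCongr hG)
  refine ⟨?_, ⟨e.symm⟩⟩
  rw [← Nat.card_congr e.toEquiv, Nat.card_eq_fintype_card]
  rfl
end
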